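/- For every non-negative integer p and reals q ≥ 0, t > q, the function g(p,q;t) defined by the recursion g(p,q;t) = ((t−q)/(p−1/2)) g(p−1,q;t) + (1/((p−1)!(p−1/2)√π)) (t−1−q)^{p−1} χ_{t>q+1} with g(0,q;t) = χ_{0<t−q<1}/(√π√(t−q)) admits the closed form g(p,q;t) = Σ_{j=1}^{p} [2^j (2p−2j−1)!! / (√π (p−j)! (2p−1)!!)] (t−q−1)^{p−j} (t−q)^{j−1} χ_{t>q+1} + [2^p (t−q)^{p−1/2} / (√π (2p−1)!!)] χ_{0<t−q<1}. -/

import Mathlib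

/-! Write `x = t - q`. Since `(2p+1)‼ = (2p+1)(2p-1)‼`, multiplying by the factor
`x / (p + 1/2) = 2x / (2p+1)` of the recursion turns the `j`-th summand for `p` into the
`(j+1)`-st summand for `p + 1`, and `x ^ (p - 1/2)` into `x ^ (p + 1/2)` with the right constant;
the inhomogeneous term of the recursion is exactly the new summand `j = 1`. -/

open Real Finset

/-- `g(p,q;t)` defined by the first-order recursion
`g(p,q;t) = ((t-q)/(p-1/2)) g(p-1,q;t) + ((t-1-q)^{p-1}/((p-1)!(p-1/2)√π)) χ_{t>q+1}`
with base case `g(0,q;t) = χ_{0<t-q<1}/(√π √(t-q))`. -/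
noncomputable def g : ℕ → ℝ → ℝ → ℝ
  | 0, q, t => (if 0 < t - q ∧ t - q < 1 then (1:ℝ) else 0) /
      (Real.sqrt Real.pi * Real.sqrt (t - q))
  | (p + 1), q, t =>
      ((t - q) / ((p + 1 : ℝ) - 1/2)) * g p q t +
        (1 / ((p.factorial : ℝ) * ((p + 1 : ℝ) - 1/2) * Real.sqrt Real.pi)) *
          (t - 1 - q) ^ p * (if q + 1 < t then (1:ℝ) else 0)

open scoped Nat

lemma Finset.sum_Icc_one_succ {M : Type*} [AddCommMonoid M] (f : ℕ → M) (n : ℕ) :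
    ∑ j ∈ Icc 1 (n + 1), f j = f 1 + ∑ j ∈ Icc 1 n, f (j + 1) := by
  rw [← insert_Icc_add_one_left_eq_Icc (by omega : 1 ≤ n + 1), sum_insert (by simp),
    ← map_add_right_Icc 1 n 1, sum_map]
  rfl

noncomputable def closedCoeff (p j : ℕ) : ℝ :=
  2 ^ j * ((2 * p - 2 * j - 1)‼ : ℝ) / (√π * ((p - j)! : ℝ) * ((2 * p - 1)‼ : ℝ))

noncomputable def closedTerm (p j : ℕ) (x : ℝ) : ℝ :=
  closedCoeff p j * (x - 1) ^ (p - j) * x ^ (j - 1)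

noncomputable def closedTail (p : ℕ) (x : ℝ) : ℝ :=
  2 ^ p * x ^ ((p : ℝ) - 1/2) / (√π * ((2 * p - 1)‼ : ℝ))

lemma add_one_sub_half (p : ℕ) : ((p + 1 : ℝ) - 1/2) = (2 * p + 1) / 2 := by ring

lemma closedCoeff_succ_succ (p j : ℕ) :
    closedCoeff (p + 1) (j + 1) = closedCoeff p j / ((p + 1 : ℝ) - 1/2) := by
  have hpj : 2 * (p + 1) - 2 * (j + 1) - 1 = 2 * p - 2 * j - 1 := by omega
  have h2p : 2 * (p + 1) - 1 = 2 * p + 1 := by omega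
  simp only [closedCoeff, hpj, h2p, Nat.add_sub_add_right, Nat.doubleFactorial_add_one,
    add_one_sub_half]
  push_cast
  field_simp
  ring

lemma closedCoeff_succ_one (p : ℕ) :
    closedCoeff (p + 1) 1 = 1 / ((p ! : ℝ) * ((p + 1 : ℝ) - 1/2) * √π) := by
  have h : 2 * (p + 1) - 2 * 1 - 1 = 2 * p - 1 := by omega
  have h2p : 2 * (p + 1) - 1 = 2 * p + 1 := by omega
  simp only [closedCoeff, h, h2p, Nat.add_sub_cancel, Nat.doubleFactorial_add_one, add_one_sub_half]
  push_cast
  field_simp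

lemma closedTerm_succ_succ (p j : ℕ) (hj : 1 ≤ j) (x : ℝ) :
    x / ((p + 1 : ℝ) - 1/2) * closedTerm p j x = closedTerm (p + 1) (j + 1) x := by
  obtain ⟨i, rfl⟩ := Nat.exists_eq_add_of_le' hj
  simp only [closedTerm, closedCoeff_succ_succ, Nat.add_sub_add_right, Nat.add_sub_cancel]
  ring

lemma closedTail_succ (p : ℕ) (x : ℝ) (hx : 0 < x) :
    x / ((p + 1 : ℝ) - 1/2) * closedTail p x = closedTail (p + 1) x := by
  have h2p : 2 * (p + 1) - 1 = 2 * p + 1 := by omega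
  have hexp : ((p + 1 : ℕ) : ℝ) - 1/2 = ((p : ℝ) - 1/2) + 1 := by push_cast; ring
  simp only [closedTail, hexp, rpow_add_one hx.ne', h2p, Nat.doubleFactorial_add_one,
    add_one_sub_half]
  push_cast
  field_simp
  ring

lemma closedTail_zero {x : ℝ} (hx : 0 ≤ x) : closedTail 0 x = 1 / (√π * √x) := by
  rw [closedTail, Nat.cast_zero, zero_sub, rpow_neg hx, ← sqrt_eq_rpow]
  simp [div_eq_mul_inv, mul_comm]

noncomputable def gClosed (p : ℕ) (q t : ℝ) : ℝ :=
  (∑ j ∈ Icc 1 p, closedTerm p j (t - q) * (if q + 1 < t then (1:ℝ) else 0)) +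
    closedTail p (t - q) * (if 0 < t - q ∧ t - q < 1 then (1:ℝ) else 0)

lemma gClosed_zero (q t : ℝ) : gClosed 0 q t = g 0 q t := by
  rw [gClosed, g, Icc_eq_empty (by omega), sum_empty, zero_add]
  split_ifs with h
  · rw [closedTail_zero h.1.le, mul_one]
  · rw [mul_zero, zero_div]

lemma gClosed_succ (p : ℕ) (q t : ℝ) :
    gClosed (p + 1) q t = ((t - q) / ((p + 1 : ℝ) - 1/2)) * gClosed p q t +
      (1 / ((p ! : ℝ) * ((p + 1 : ℝ) - 1/2) * √π)) * (t - 1 - q) ^ p *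
        (if q + 1 < t then (1:ℝ) else 0) := by
  rw [sub_right_comm t 1 q]
  set x := t - q
  set χ₁ : ℝ := if q + 1 < t then 1 else 0
  set χ₂ : ℝ := if 0 < x ∧ x < 1 then 1 else 0
  have hterms : ∀ j ∈ Icc 1 p, closedTerm (p + 1) (j + 1) x * χ₁ =
      x / ((p + 1 : ℝ) - 1/2) * (closedTerm p j x * χ₁) := fun j hj => by
    rw [← closedTerm_succ_succ p j (mem_Icc.1 hj).1, mul_assoc]
  have htail :
      closedTail (p + 1) x * χ₂ = x / ((p + 1 : ℝ) - 1/2) * (closedTail p x * χ₂) := by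
    by_cases h : 0 < x ∧ x < 1
    · rw [← closedTail_succ p x h.1, mul_assoc]
    · simp only [χ₂, if_neg h, mul_zero]
  have hfirst :
      closedTerm (p + 1) 1 x = 1 / ((p ! : ℝ) * ((p + 1 : ℝ) - 1/2) * √π) * (x - 1) ^ p := by
    rw [closedTerm, closedCoeff_succ_one, Nat.add_sub_cancel, Nat.sub_self, pow_zero, mul_one]
  rw [gClosed, gClosed, sum_Icc_one_succ, sum_congr rfl hterms, htail, hfirst, mul_add, mul_sum]
  ring

lemma g_eq_gClosed (p : ℕ) (q t : ℝ) : g p q t = gClosed p q t := by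
  induction p with
  | zero => exact (gClosed_zero q t).symm
  | succ p ih => rw [g, ih, gClosed_succ]

theorem g_closed_form_general (p : ℕ) (q t : ℝ) :
    g p q t =
      (∑ j ∈ Finset.Icc 1 p,
          (2 ^ j * (Nat.doubleFactorial (2 * p - 2 * j - 1) : ℝ) /
              (Real.sqrt Real.pi * ((p - j).factorial : ℝ) *
                (Nat.doubleFactorial (2 * p - 1) : ℝ))) *
            (t - q - 1) ^ (p - j) * (t - q) ^ (j - 1) *
            (if q + 1 < t then (1:ℝ) else 0)) +
        (2 ^ p * (t - q) ^ ((p : ℝ) - 1/2) /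
            (Real.sqrt Real.pi * (Nat.doubleFactorial (2 * p - 1) : ℝ))) *
          (if 0 < t - q ∧ t - q < 1 then (1:ℝ) else 0) :=
  g_eq_gClosed p q t

theorem g_closed_form (p : ℕ) (q t : ℝ) (hq : 0 ≤ q) (ht : q < t) :
    g p q t =
      (∑ j ∈ Finset.Icc 1 p,
          (2 ^ j * (Nat.doubleFactorial (2 * p - 2 * j - 1) : ℝ) /
              (Real.sqrt Real.pi * ((p - j).factorial : ℝ) *
                (Nat.doubleFactorial (2 * p - 1) : ℝ))) *
            (t - q - 1) ^ (p - j) * (t - q) ^ (j - 1) *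
            (if q + 1 < t then (1:ℝ) else 0)) +
        (2 ^ p * (t - q) ^ ((p : ℝ) - 1/2) /
            (Real.sqrt Real.pi * (Nat.doubleFactorial (2 * p - 1) : ℝ))) *
          (if 0 < t - q ∧ t - q < 1 then (1:ℝ) else 0) :=
  g_closed_form_general p q t
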